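/- arXiv:1303.4520 — 6 statements merged into one kernel-verified Lean document; each statement's English description precedes it below -/
import Mathlib

section
/- Let H = (V, E) be a finite hypergraph with |V| = n. Then in ℤ[x, y] one has the identity P_H(x, y) = Σ_{L ⊆ E} x^{|∪L|} (1 + x)^{n − |∪L|} (y − 1)^{|L|}; that is, P_H(x, y) = (1 + x)^n · S_H(x/(1 + x), y − 1) after clearing denominators. -/
open Finset MvPolynomial

lemma sum_powerset_pow_card {α : Type*} [DecidableEq α] {R : Type*} [CommRing R]
    (S : Finset α) (z : R) :
    ∑ t ∈ S.powerset, z ^ t.card = (z + 1) ^ S.card := by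
  have h := Finset.prod_add (fun _ : α => z) (fun _ => 1) S
  simpa [Finset.prod_const] using h.symm

lemma sum_filter_superset_pow {α : Type*} [DecidableEq α] {R : Type*} [CommRing R]
    (V A : Finset α) (hA : A ⊆ V) (x : R) :
    ∑ W ∈ V.powerset.filter (A ⊆ ·), x ^ W.card
      = x ^ A.card * (1 + x) ^ (V.card - A.card) := by
  have himg : V.powerset.filter (A ⊆ ·) = (V \ A).powerset.image (fun B => A ∪ B) := by
    ext W
    simp only [Finset.mem_filter, Finset.mem_powerset, Finset.mem_image]
    constructor
    · rintro ⟨hWV, hAW⟩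
      exact ⟨W \ A, Finset.sdiff_subset_sdiff hWV le_rfl,
        Finset.union_sdiff_of_subset hAW⟩
    · rintro ⟨B, hB, rfl⟩
      exact ⟨Finset.union_subset hA (hB.trans Finset.sdiff_subset), Finset.subset_union_left⟩
  rw [himg, Finset.sum_image]
  · have hdisj : ∀ B ∈ (V \ A).powerset, Disjoint A B := fun B hB =>
      Finset.disjoint_sdiff.mono_right (Finset.mem_powerset.mp hB)
    rw [Finset.sum_congr rfl (fun B hB => by
      rw [Finset.card_union_of_disjoint (hdisj B hB), pow_add])]
    rw [← Finset.mul_sum, sum_powerset_pow_card, Finset.card_sdiff_of_subset hA, add_comm x 1]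
  · intro B₁ h₁ B₂ h₂ h
    have d₁ := Finset.disjoint_sdiff.mono_right (Finset.mem_powerset.mp h₁)
    have d₂ := Finset.disjoint_sdiff.mono_right (Finset.mem_powerset.mp h₂)
    have : (A ∪ B₁) \ A = (A ∪ B₂) \ A := by rw [show A ∪ B₁ = A ∪ B₂ from h]
    rwa [Finset.union_sdiff_cancel_left d₁, Finset.union_sdiff_cancel_left d₂] at this

theorem vertex_induced_eq_edge_induced_transform
    {α : Type*} [DecidableEq α] (V : Finset α) (E : Finset (Finset α))
    (hEV : ∀ ε ∈ E, ε ⊆ V)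
    (hAnti : ∀ ε₁ ∈ E, ∀ ε₂ ∈ E, ε₁ ⊆ ε₂ → ε₁ = ε₂) :
    (∑ W ∈ V.powerset,
        (X 0 : MvPolynomial (Fin 2) ℤ) ^ W.card * X 1 ^ (E.filter (· ⊆ W)).card)
      = ∑ L ∈ E.powerset,
          (X 0 : MvPolynomial (Fin 2) ℤ) ^ (L.sup id).card
            * (1 + X 0) ^ (V.card - (L.sup id).card) * (X 1 - 1) ^ L.card := by
  classical
  have step1 : ∀ W : Finset α,
      (X 1 : MvPolynomial (Fin 2) ℤ) ^ (E.filter (· ⊆ W)).card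
        = ∑ L ∈ (E.filter (· ⊆ W)).powerset, (X 1 - 1) ^ L.card := by
    intro W
    rw [sum_powerset_pow_card]
    ring_nf
  have step2 : ∀ W : Finset α,
      (E.filter (· ⊆ W)).powerset = E.powerset.filter (fun L => L.sup id ⊆ W) := by
    intro W
    ext L
    simp only [Finset.mem_powerset, Finset.mem_filter,
      ← Finset.le_eq_subset, Finset.sup_le_iff, id_eq]
    constructor
    · intro h
      exact ⟨fun a ha => (Finset.mem_filter.mp (h ha)).1,
        fun a ha => (Finset.mem_filter.mp (h ha)).2⟩
    · intro h a ha
      exact Finset.mem_filter.mpr ⟨h.1 ha, h.2 a ha⟩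
  calc ∑ W ∈ V.powerset,
        (X 0 : MvPolynomial (Fin 2) ℤ) ^ W.card * X 1 ^ (E.filter (· ⊆ W)).card
      = ∑ W ∈ V.powerset, ∑ L ∈ E.powerset,
          (if L.sup id ⊆ W then (X 0 : MvPolynomial (Fin 2) ℤ) ^ W.card * (X 1 - 1) ^ L.card
            else 0) := by
        refine Finset.sum_congr rfl (fun W _ => ?_)
        rw [step1 W, step2 W, Finset.mul_sum, ← Finset.sum_filter]
    _ = ∑ L ∈ E.powerset, ∑ W ∈ V.powerset,
          (if L.sup id ⊆ W then (X 0 : MvPolynomial (Fin 2) ℤ) ^ W.card * (X 1 - 1) ^ L.card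
            else 0) := Finset.sum_comm
    _ = ∑ L ∈ E.powerset,
          (X 0 : MvPolynomial (Fin 2) ℤ) ^ (L.sup id).card
            * (1 + X 0) ^ (V.card - (L.sup id).card) * (X 1 - 1) ^ L.card := by
        refine Finset.sum_congr rfl (fun L hL => ?_)
        have hsub : L.sup id ⊆ V :=
          show L.sup id ≤ V from Finset.sup_le fun ε hε => hEV ε (Finset.mem_powerset.mp hL hε)
        rw [← Finset.sum_filter,
          show (∑ W ∈ V.powerset.filter (fun W => L.sup id ⊆ W),
            (X 0 : MvPolynomial (Fin 2) ℤ) ^ W.card * (X 1 - 1) ^ L.card)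
            = (∑ W ∈ V.powerset.filter (L.sup id ⊆ ·),
              (X 0 : MvPolynomial (Fin 2) ℤ) ^ W.card) * (X 1 - 1) ^ L.card from
            (Finset.sum_mul _ _ _).symm,
          sum_filter_superset_pow V (L.sup id) hsub]
end

section
/- Let H = (V, E) be a finite hypergraph with |V| = n. Then in ℤ[t] one has S_H(t, −1) = Σ_{W ⊆ V independent} t^{|W|} (1 − t)^{n − |W|}; that is, Σ_{L ⊆ E} (−1)^{|L|} t^{|∪L|} = Σ_{i ≥ 0} f_{i−1} t^i (1 − t)^{n − i}, where f_{i−1} is the number of independent sets of size i. (This is the numerator identity S_H(t, −1) = H_R(t)(1 − t)^n for the Hilbert series H_R(t) of the Stanley–Reisner ring of the independence complex of H.) -/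
open Finset Polynomial

private lemma binom_one {α : Type*} [DecidableEq α] (A : Finset α) :
    ∑ U ∈ A.powerset, (X : Polynomial ℤ) ^ U.card * (1 - X) ^ (A.card - U.card) = 1 := by
  have h := Finset.prod_add (fun _ : α => (X : Polynomial ℤ)) (fun _ => 1 - X) A
  simp only [Finset.prod_const] at h
  have h2 : ∀ U ∈ A.powerset, (X : Polynomial ℤ) ^ U.card * (1 - X) ^ ((A \ U).card)
      = (X : Polynomial ℤ) ^ U.card * (1 - X) ^ (A.card - U.card) := by
    intro U hU
    rw [Finset.card_sdiff_of_subset (Finset.mem_powerset.mp hU)]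
  rw [Finset.sum_congr rfl h2] at h
  rw [← h]
  simp

private lemma sub_sum {α : Type*} [DecidableEq α] (V S : Finset α) (hS : S ⊆ V) :
    (X : Polynomial ℤ) ^ S.card
      = ∑ T ∈ V.powerset.filter (fun T => S ⊆ T),
          X ^ T.card * (1 - X) ^ (V.card - T.card) := by
  rw [eq_comm]
  calc ∑ T ∈ V.powerset.filter (fun T => S ⊆ T),
          (X : Polynomial ℤ) ^ T.card * (1 - X) ^ (V.card - T.card)
      = ∑ U ∈ (V \ S).powerset,
          (X : Polynomial ℤ) ^ S.card * (X ^ U.card * (1 - X) ^ ((V \ S).card - U.card)) := by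
        refine Finset.sum_nbij' (fun T => T \ S) (fun U => U ∪ S) ?_ ?_ ?_ ?_ ?_
        · intro T hT
          simp only [Finset.mem_filter, Finset.mem_powerset] at hT ⊢
          exact Finset.sdiff_subset_sdiff hT.1 le_rfl
        · intro U hU
          simp only [Finset.mem_powerset] at hU ⊢
          simp only [Finset.mem_filter, Finset.mem_powerset]
          exact ⟨Finset.union_subset (hU.trans Finset.sdiff_subset) hS,
            Finset.subset_union_right⟩
        · intro T hT
          simp only [Finset.mem_filter, Finset.mem_powerset] at hT
          exact Finset.sdiff_union_of_subset hT.2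
        · intro U hU
          simp only [Finset.mem_powerset] at hU
          exact Finset.union_sdiff_cancel_right
            (Finset.disjoint_left.mpr fun a ha => (Finset.mem_sdiff.mp (hU ha)).2)
        · intro T hT
          simp only [Finset.mem_filter, Finset.mem_powerset] at hT
          have hcard : T.card = (T \ S).card + S.card := by
            rw [Finset.card_sdiff_of_subset hT.2, Nat.sub_add_cancel (Finset.card_le_card hT.2)]
          have hcard2 : V.card - T.card = (V \ S).card - (T \ S).card := by
            rw [Finset.card_sdiff_of_subset hS, Finset.card_sdiff_of_subset hT.2]
            have := Finset.card_le_card hT.1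
            have := Finset.card_le_card hT.2
            omega
          show (X : Polynomial ℤ) ^ T.card * (1 - X) ^ (V.card - T.card)
            = X ^ S.card * (X ^ (T \ S).card * (1 - X) ^ ((V \ S).card - (T \ S).card))
          rw [hcard2, hcard, pow_add]
          ring
    _ = X ^ S.card := by rw [← Finset.mul_sum, binom_one, mul_one]

private lemma neg_one_sum {α : Type*} [DecidableEq α] (s : Finset α) :
    ∑ L ∈ s.powerset, (-1 : Polynomial ℤ) ^ L.card
      = if s = ∅ then 1 else 0 := by
  have h := Finset.sum_powerset_neg_one_pow_card (x := s)
  have h2 : ((∑ m ∈ s.powerset, (-1 : ℤ) ^ m.card : ℤ) : Polynomial ℤ)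
      = ∑ L ∈ s.powerset, (-1 : Polynomial ℤ) ^ L.card := by push_cast; rfl
  rw [← h2, h]
  split <;> simp

/-- For a finite hypergraph `H = (V, E)` with `|V| = n`, one has in
`ℤ[t]` the identity `S_H(t, -1) = Σ_{W ⊆ V independent} t^{|W|} (1-t)^{n-|W|}`,
i.e. `Σ_{L ⊆ E} (-1)^{|L|} t^{|∪L|} = Σ_{W independent} t^{|W|} (1-t)^{n-|W|}`.
(This is the numerator identity `S_H(t,-1) = H_R(t)(1-t)^n` for the Hilbert
series of the Stanley–Reisner ring of the independence complex of `H`.) -/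
theorem edge_induced_at_neg_one_eq_independence_numerator
    {α : Type*} [DecidableEq α] (V : Finset α) (E : Finset (Finset α))
    (hEV : ∀ ε ∈ E, ε ⊆ V)
    (hAnti : ∀ ε₁ ∈ E, ∀ ε₂ ∈ E, ε₁ ⊆ ε₂ → ε₁ = ε₂) :
    (∑ L ∈ E.powerset, (-1 : Polynomial ℤ) ^ L.card * X ^ (L.sup id).card)
      = ∑ W ∈ V.powerset.filter (fun W => ∀ ε ∈ E, ¬ ε ⊆ W),
          (X : Polynomial ℤ) ^ W.card * (1 - X) ^ (V.card - W.card) := by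
  classical
  have step1 : ∀ L ∈ E.powerset, (-1 : Polynomial ℤ) ^ L.card * X ^ (L.sup id).card
      = ∑ T ∈ V.powerset, (if L.sup id ⊆ T then
          (-1 : Polynomial ℤ) ^ L.card * (X ^ T.card * (1 - X) ^ (V.card - T.card)) else 0) := by
    intro L hL
    rw [Finset.mem_powerset] at hL
    have hsub : L.sup id ⊆ V := Finset.sup_le fun ε hε => hEV ε (hL hε)
    rw [sub_sum V (L.sup id) hsub, Finset.mul_sum, Finset.sum_filter]
  rw [Finset.sum_congr rfl step1, Finset.sum_comm]
  have step2 : ∀ T ∈ V.powerset,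
      (∑ L ∈ E.powerset, if L.sup id ⊆ T then
          (-1 : Polynomial ℤ) ^ L.card * (X ^ T.card * (1 - X) ^ (V.card - T.card)) else 0)
      = if ∀ ε ∈ E, ¬ ε ⊆ T then
          (X : Polynomial ℤ) ^ T.card * (1 - X) ^ (V.card - T.card) else 0 := by
    intro T hT
    have hset : ∀ L : Finset (Finset α),
        L ∈ E.powerset ∧ L.sup id ⊆ T ↔ L ∈ (E.filter (fun ε => ε ⊆ T)).powerset := by
      intro L
      simp only [Finset.mem_powerset]
      constructor
      · rintro ⟨h1, h2⟩ ε hε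
        exact Finset.mem_filter.mpr ⟨h1 hε, le_trans (Finset.le_sup (f := id) hε) h2⟩
      · intro h
        exact ⟨h.trans (Finset.filter_subset _ _),
          Finset.sup_le fun ε hε => (Finset.mem_filter.mp (h hε)).2⟩
    calc (∑ L ∈ E.powerset, if L.sup id ⊆ T then
          (-1 : Polynomial ℤ) ^ L.card * (X ^ T.card * (1 - X) ^ (V.card - T.card)) else 0)
        = ∑ L ∈ (E.filter (fun ε => ε ⊆ T)).powerset,
            (-1 : Polynomial ℤ) ^ L.card * (X ^ T.card * (1 - X) ^ (V.card - T.card)) := by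
          rw [← Finset.sum_filter]
          refine Finset.sum_congr ?_ fun _ _ => rfl
          ext L
          rw [Finset.mem_filter, hset]
      _ = (∑ L ∈ (E.filter (fun ε => ε ⊆ T)).powerset, (-1 : Polynomial ℤ) ^ L.card)
            * (X ^ T.card * (1 - X) ^ (V.card - T.card)) := by rw [Finset.sum_mul]
      _ = _ := by
          rw [neg_one_sum]
          simp only [Finset.filter_eq_empty_iff, ite_mul, one_mul, zero_mul]
  rw [Finset.sum_congr rfl step2, ← Finset.sum_filter]
end

section
/- Let H = (V, E) be a finite hypergraph with |V| = n. Then in the formal power series ring ℚ⟦t⟧, (1 − t)^n · Σ_{W ⊆ V independent} t^{|W|} (1 − t)^{−|W|} = Σ_{L ⊆ E} (−1)^{|L|} t^{|∪L|}; that is, the Hilbert series H_R(t) = Σ_{W independent} (t/(1 − t))^{|W|} of the Stanley–Reisner ring of the independence complex of H satisfies H_R(t) = S_H(t, −1)/(1 − t)^n. -/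
open Finset PowerSeries

lemma binom_aux {α : Type*} [DecidableEq α] (S : Finset α) :
    ∑ A ∈ S.powerset, (X : PowerSeries ℚ) ^ A.card * (1 - X) ^ (S.card - A.card) = 1 := by
  have h := Finset.prod_add (fun _ : α => (X : PowerSeries ℚ)) (fun _ => (1 - X)) S
  have hl : ∏ _i ∈ S, ((X : PowerSeries ℚ) + (1 - X)) = 1 := by
    simp [add_sub_cancel]
  rw [hl] at h
  calc ∑ A ∈ S.powerset, (X : PowerSeries ℚ) ^ A.card * (1 - X) ^ (S.card - A.card)
      = ∑ A ∈ S.powerset, (∏ _i ∈ A, (X : PowerSeries ℚ)) * ∏ _i ∈ S \ A, (1 - X) := by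
        refine Finset.sum_congr rfl fun A hA => ?_
        rw [Finset.mem_powerset] at hA
        rw [Finset.prod_const, Finset.prod_const, Finset.card_sdiff_of_subset hA]
    _ = 1 := h.symm

lemma indep_indicator {α : Type*} [DecidableEq α] (E : Finset (Finset α)) (W : Finset α) :
    ∑ L ∈ E.powerset.filter (fun L => L.sup id ⊆ W), (-1 : PowerSeries ℚ) ^ L.card
      = if (∀ ε ∈ E, ¬ ε ⊆ W) then 1 else 0 := by
  have hset : E.powerset.filter (fun L => L.sup id ⊆ W)
      = (E.filter (fun ε => ε ⊆ W)).powerset := by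
    ext L
    simp only [Finset.mem_filter, Finset.mem_powerset]
    constructor
    · rintro ⟨hLE, hsup⟩ x hx
      have hxs : x ≤ L.sup id := Finset.le_sup (f := id) hx
      exact Finset.mem_filter.2 ⟨hLE hx, le_trans hxs hsup⟩
    · intro h
      refine ⟨fun x hx => (Finset.mem_filter.1 (h hx)).1, ?_⟩
      exact Finset.sup_le fun x hx => (Finset.mem_filter.1 (h hx)).2
  rw [hset]
  have hcast : ∑ L ∈ (E.filter (fun ε => ε ⊆ W)).powerset, (-1 : PowerSeries ℚ) ^ L.card
      = ((∑ L ∈ (E.filter (fun ε => ε ⊆ W)).powerset, (-1 : ℤ) ^ L.card : ℤ) : PowerSeries ℚ) := by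
    push_cast
    rfl
  rw [hcast, Finset.sum_powerset_neg_one_pow_card]
  by_cases h : ∀ ε ∈ E, ¬ ε ⊆ W
  · rw [if_pos h, Finset.filter_eq_empty_iff.2 h]
    simp
  · rw [if_neg h, if_neg (fun he => h (Finset.filter_eq_empty_iff.1 he))]
    simp

lemma superset_sum {α : Type*} [DecidableEq α] (V U : Finset α) (hU : U ⊆ V) :
    ∑ W ∈ V.powerset.filter (fun W => U ⊆ W),
        (X : PowerSeries ℚ) ^ W.card * (1 - X) ^ (V.card - W.card)
      = X ^ U.card := by
  have key : ∑ W ∈ V.powerset.filter (fun W => U ⊆ W),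
      (X : PowerSeries ℚ) ^ W.card * (1 - X) ^ (V.card - W.card)
      = ∑ A ∈ (V \ U).powerset,
          (X : PowerSeries ℚ) ^ (A.card + U.card) * (1 - X) ^ ((V \ U).card - A.card) := by
    refine Finset.sum_nbij' (fun W => W \ U) (fun A => A ∪ U) ?_ ?_ ?_ ?_ ?_
    · intro W hW
      rw [Finset.mem_filter, Finset.mem_powerset] at hW
      rw [Finset.mem_powerset]
      exact Finset.sdiff_subset_sdiff hW.1 Finset.Subset.rfl
    · intro A hA
      rw [Finset.mem_powerset] at hA
      rw [Finset.mem_filter, Finset.mem_powerset]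
      exact ⟨Finset.union_subset (hA.trans Finset.sdiff_subset) hU, Finset.subset_union_right⟩
    · intro W hW
      rw [Finset.mem_filter] at hW
      exact Finset.sdiff_union_of_subset hW.2
    · intro A hA
      rw [Finset.mem_powerset] at hA
      have hd : Disjoint A U := Finset.disjoint_of_subset_left hA Finset.sdiff_disjoint
      show (A ∪ U) \ U = A
      rw [Finset.union_sdiff_cancel_right hd]
    · intro W hW
      rw [Finset.mem_filter, Finset.mem_powerset] at hW
      have hd : Disjoint (W \ U) U := Finset.sdiff_disjoint
      have hc : (W \ U).card + U.card = W.card := by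
        rw [← Finset.card_union_of_disjoint hd, Finset.sdiff_union_of_subset hW.2]
      rw [hc]
      congr 1
      have h1 : U.card ≤ W.card := Finset.card_le_card hW.2
      have h2 : W.card ≤ V.card := Finset.card_le_card hW.1
      rw [Finset.card_sdiff_of_subset hW.2, Finset.card_sdiff_of_subset hU]
      have he : V.card - U.card - (W.card - U.card) = V.card - W.card := by omega
      rw [he]
  rw [key]
  have : ∀ A ∈ (V \ U).powerset,
      (X : PowerSeries ℚ) ^ (A.card + U.card) * (1 - X) ^ ((V \ U).card - A.card)
        = X ^ U.card * (X ^ A.card * (1 - X) ^ ((V \ U).card - A.card)) := by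
    intro A _
    rw [pow_add]
    ring
  rw [Finset.sum_congr rfl this, ← Finset.mul_sum, binom_aux, mul_one]

/-- For a finite hypergraph `H = (V, E)` with `|V| = n`, in the
formal power series ring `ℚ⟦t⟧` one has
`(1-t)^n · Σ_{W ⊆ V independent} t^{|W|} (1-t)^{-|W|} = Σ_{L ⊆ E} (-1)^{|L|} t^{|∪L|}`;
that is, the Hilbert series `H_R(t) = Σ_{W independent} (t/(1-t))^{|W|}` of the
Stanley–Reisner ring of the independence complex of `H` satisfies
`H_R(t) = S_H(t, -1)/(1-t)^n`. -/
theorem hilbert_series_eq_edge_induced_at_neg_one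
    {α : Type*} [DecidableEq α] (V : Finset α) (E : Finset (Finset α))
    (hEV : ∀ ε ∈ E, ε ⊆ V)
    (hAnti : ∀ ε₁ ∈ E, ∀ ε₂ ∈ E, ε₁ ⊆ ε₂ → ε₁ = ε₂) :
    ((1 - X : PowerSeries ℚ) ^ V.card
        * ∑ W ∈ V.powerset.filter (fun W => ∀ ε ∈ E, ¬ ε ⊆ W),
            (X : PowerSeries ℚ) ^ W.card * ((1 - X)⁻¹) ^ W.card)
      = ∑ L ∈ E.powerset, (-1 : PowerSeries ℚ) ^ L.card * X ^ (L.sup id).card := by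
  have hc : constantCoeff (R := ℚ) (1 - X) ≠ 0 := by simp
  have hunit : (1 - X : PowerSeries ℚ) * (1 - X)⁻¹ = 1 := PowerSeries.mul_inv_cancel _ hc
  calc ((1 - X : PowerSeries ℚ) ^ V.card
        * ∑ W ∈ V.powerset.filter (fun W => ∀ ε ∈ E, ¬ ε ⊆ W),
            (X : PowerSeries ℚ) ^ W.card * ((1 - X)⁻¹) ^ W.card)
      = ∑ W ∈ V.powerset.filter (fun W => ∀ ε ∈ E, ¬ ε ⊆ W),
          (X : PowerSeries ℚ) ^ W.card * (1 - X) ^ (V.card - W.card) := by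
        rw [Finset.mul_sum]
        refine Finset.sum_congr rfl fun W hW => ?_
        have hWV : W ⊆ V := Finset.mem_powerset.1 (Finset.mem_filter.1 hW).1
        have hk : W.card ≤ V.card := Finset.card_le_card hWV
        have hsplit : (1 - X : PowerSeries ℚ) ^ V.card
            = (1 - X) ^ (V.card - W.card) * (1 - X) ^ W.card := by
          rw [← pow_add, Nat.sub_add_cancel hk]
        have h2 : (1 - X : PowerSeries ℚ) ^ W.card * ((1 - X)⁻¹) ^ W.card = 1 := by
          rw [← mul_pow, hunit, one_pow]
        calc (1 - X : PowerSeries ℚ) ^ V.card * ((X : PowerSeries ℚ) ^ W.card * ((1 - X)⁻¹) ^ W.card)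
            = (X : PowerSeries ℚ) ^ W.card * (1 - X) ^ (V.card - W.card)
                * ((1 - X) ^ W.card * ((1 - X)⁻¹) ^ W.card) := by rw [hsplit]; ring
          _ = (X : PowerSeries ℚ) ^ W.card * (1 - X) ^ (V.card - W.card) := by rw [h2, mul_one]
    _ = ∑ W ∈ V.powerset,
          (if ∀ ε ∈ E, ¬ ε ⊆ W then (1 : PowerSeries ℚ) else 0)
            * ((X : PowerSeries ℚ) ^ W.card * (1 - X) ^ (V.card - W.card)) := by
        rw [Finset.sum_filter]
        refine Finset.sum_congr rfl fun W _ => ?_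
        split_ifs <;> simp
    _ = ∑ W ∈ V.powerset,
          (∑ L ∈ E.powerset.filter (fun L => L.sup id ⊆ W), (-1 : PowerSeries ℚ) ^ L.card)
            * ((X : PowerSeries ℚ) ^ W.card * (1 - X) ^ (V.card - W.card)) := by
        refine Finset.sum_congr rfl fun W _ => ?_
        rw [indep_indicator]
    _ = ∑ W ∈ V.powerset, ∑ L ∈ E.powerset,
          (if L.sup id ⊆ W then
            (-1 : PowerSeries ℚ) ^ L.card * ((X : PowerSeries ℚ) ^ W.card * (1 - X) ^ (V.card - W.card))
           else 0) := by
        refine Finset.sum_congr rfl fun W _ => ?_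
        rw [Finset.sum_mul, Finset.sum_filter]
    _ = ∑ L ∈ E.powerset, ∑ W ∈ V.powerset,
          (if L.sup id ⊆ W then
            (-1 : PowerSeries ℚ) ^ L.card * ((X : PowerSeries ℚ) ^ W.card * (1 - X) ^ (V.card - W.card))
           else 0) := Finset.sum_comm
    _ = ∑ L ∈ E.powerset, (-1 : PowerSeries ℚ) ^ L.card
          * ∑ W ∈ V.powerset.filter (fun W => L.sup id ⊆ W),
              (X : PowerSeries ℚ) ^ W.card * (1 - X) ^ (V.card - W.card) := by
        refine Finset.sum_congr rfl fun L _ => ?_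
        rw [Finset.mul_sum, ← Finset.sum_filter]
    _ = ∑ L ∈ E.powerset, (-1 : PowerSeries ℚ) ^ L.card * X ^ (L.sup id).card := by
        refine Finset.sum_congr rfl fun L hL => ?_
        have hUV : L.sup id ⊆ V :=
          Finset.sup_le fun ε hε => hEV ε (Finset.mem_powerset.1 hL hε)
        rw [superset_sum V (L.sup id) hUV]
end

section
/- Let H = (V, E) be a finite hypergraph with |V| = n. Then in ℤ[x, y] one has n · S_H(x, y) = x · ∂S_H(x, y)/∂x + Σ_{v ∈ V} S_{H−v}(x, y), where S_{H−v} is the edge-induced subhypergraph polynomial of the vertex-deleted subhypergraph H − v. In particular, the polynomial S_H is reconstructible from the deck {S_{H−v}}_{v ∈ V}. -/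
open Finset MvPolynomial

/-- For a finite hypergraph `H = (V, E)` with `|V| = n`, in `ℤ[x,y]`
one has `n · S_H(x,y) = x · ∂S_H/∂x + Σ_{v ∈ V} S_{H-v}(x,y)`, where `S_{H-v}` is
the edge-induced subhypergraph polynomial of the vertex-deleted subhypergraph
`H - v` (whose edges are those `ε ∈ E` with `v ∉ ε`). In particular `S_H` is
reconstructible from the deck. -/
theorem edge_induced_polynomial_reconstructible
    {α : Type*} [DecidableEq α] (V : Finset α) (E : Finset (Finset α))
    (hEV : ∀ ε ∈ E, ε ⊆ V)
    (hAnti : ∀ ε₁ ∈ E, ∀ ε₂ ∈ E, ε₁ ⊆ ε₂ → ε₁ = ε₂) :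
    (V.card : MvPolynomial (Fin 2) ℤ) *
        (∑ L ∈ E.powerset,
          (X 0 : MvPolynomial (Fin 2) ℤ) ^ (L.sup id).card * X 1 ^ L.card)
      = X 0 * pderiv 0
          (∑ L ∈ E.powerset,
            (X 0 : MvPolynomial (Fin 2) ℤ) ^ (L.sup id).card * X 1 ^ L.card)
        + ∑ v ∈ V, ∑ L ∈ (E.filter (fun ε => v ∉ ε)).powerset,
            (X 0 : MvPolynomial (Fin 2) ℤ) ^ (L.sup id).card * X 1 ^ L.card := by
  classical
  set f : Finset (Finset α) → MvPolynomial (Fin 2) ℤ :=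
    fun L => (X 0 : MvPolynomial (Fin 2) ℤ) ^ (L.sup id).card * X 1 ^ L.card with hf
  have hsub : ∀ L ∈ E.powerset, (L.sup id) ⊆ V := by
    intro L hL
    rw [mem_powerset] at hL
    exact Finset.sup_le fun ε hε => hEV ε (hL hε)
  -- derivative term
  have hder : X 0 * pderiv 0 (∑ L ∈ E.powerset, f L)
      = ∑ L ∈ E.powerset, ((L.sup id).card : MvPolynomial (Fin 2) ℤ) * f L := by
    rw [map_sum, Finset.mul_sum]
    refine Finset.sum_congr rfl fun L _ => ?_
    simp only [hf]
    generalize (L.sup id).card = k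
    generalize L.card = m
    simp [pderiv_mul, pderiv_pow, pderiv_X]
    cases k with
    | zero => simp
    | succ n => ring_nf; simp
  -- deck term
  have hdeck : (∑ v ∈ V, ∑ L ∈ (E.filter (fun ε => v ∉ ε)).powerset, f L)
      = ∑ L ∈ E.powerset, ((V.card - (L.sup id).card : ℕ) : MvPolynomial (Fin 2) ℤ) * f L := by
    have h1 : ∀ v, (E.filter (fun ε => v ∉ ε)).powerset
        = E.powerset.filter (fun L => v ∉ L.sup id) := by
      intro v
      ext L
      simp only [mem_powerset, mem_filter]
      constructor
      · intro h
        constructor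
        · exact fun x hx => (Finset.mem_filter.mp (h hx)).1
        · intro hv
          obtain ⟨ε, hεL, hvε⟩ := Finset.mem_sup.mp hv
          exact (Finset.mem_filter.mp (h hεL)).2 hvε
      · rintro ⟨hLE, hv⟩ x hx
        refine Finset.mem_filter.mpr ⟨hLE hx, fun hvx => hv ?_⟩
        exact Finset.mem_sup.mpr ⟨x, hx, hvx⟩
    calc ∑ v ∈ V, ∑ L ∈ (E.filter (fun ε => v ∉ ε)).powerset, f L
        = ∑ v ∈ V, ∑ L ∈ E.powerset, if v ∉ L.sup id then f L else 0 := by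
          refine Finset.sum_congr rfl fun v _ => ?_
          rw [h1 v, Finset.sum_filter]
      _ = ∑ L ∈ E.powerset, ∑ v ∈ V, if v ∉ L.sup id then f L else 0 :=
          Finset.sum_comm
      _ = ∑ L ∈ E.powerset, ((V.card - (L.sup id).card : ℕ) : MvPolynomial (Fin 2) ℤ) * f L := by
          refine Finset.sum_congr rfl fun L hL => ?_
          rw [← Finset.sum_filter, Finset.sum_const, nsmul_eq_mul]
          congr 2
          have : V.filter (fun v => v ∉ L.sup id) = V \ L.sup id := by
            ext v; simp [Finset.mem_sdiff]
          rw [this, Finset.card_sdiff_of_subset (hsub L hL)]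
  rw [hder, hdeck, Finset.mul_sum, ← Finset.sum_add_distrib]
  refine Finset.sum_congr rfl fun L hL => ?_
  have hle : (L.sup id).card ≤ V.card := Finset.card_le_card (hsub L hL)
  rw [Nat.cast_sub hle]
  push_cast
  ring
end

section
/- Let H = (V, E) be a finite hypergraph with |V| = n. Then in ℤ[x, y] one has n · P_H(x, y) = x · ∂P_H(x, y)/∂x + Σ_{v ∈ V} P_{H−v}(x, y), where P_{H−v} is the vertex-induced subhypergraph polynomial of the vertex-deleted subhypergraph H − v. In particular, the polynomial P_H is reconstructible from the deck {P_{H−v}}_{v ∈ V}. -/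
open Finset MvPolynomial

/-- For a finite hypergraph `H = (V, E)` with `|V| = n`, in `ℤ[x,y]`
one has `n · P_H(x,y) = x · ∂P_H/∂x + Σ_{v ∈ V} P_{H-v}(x,y)`, where `P_{H-v}` is
the vertex-induced subhypergraph polynomial of the vertex-deleted subhypergraph
`H - v` (vertex set `V ∖ {v}`, edges those `ε ∈ E` with `v ∉ ε`). In particular
`P_H` is reconstructible from the deck. -/
theorem vertex_induced_polynomial_reconstructible
    {α : Type*} [DecidableEq α] (V : Finset α) (E : Finset (Finset α))
    (hEV : ∀ ε ∈ E, ε ⊆ V)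
    (hAnti : ∀ ε₁ ∈ E, ∀ ε₂ ∈ E, ε₁ ⊆ ε₂ → ε₁ = ε₂) :
    (V.card : MvPolynomial (Fin 2) ℤ) *
        (∑ W ∈ V.powerset,
          (X 0 : MvPolynomial (Fin 2) ℤ) ^ W.card * X 1 ^ (E.filter (· ⊆ W)).card)
      = X 0 * pderiv 0
          (∑ W ∈ V.powerset,
            (X 0 : MvPolynomial (Fin 2) ℤ) ^ W.card * X 1 ^ (E.filter (· ⊆ W)).card)
        + ∑ v ∈ V, ∑ W ∈ (V.erase v).powerset,
            (X 0 : MvPolynomial (Fin 2) ℤ) ^ W.card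
              * X 1 ^ ((E.filter (fun ε => v ∉ ε)).filter (· ⊆ W)).card := by
  set f : Finset α → MvPolynomial (Fin 2) ℤ :=
    fun W => (X 0 : MvPolynomial (Fin 2) ℤ) ^ W.card * X 1 ^ (E.filter (· ⊆ W)).card with hf
  -- deck sum
  have hdeck : (∑ v ∈ V, ∑ W ∈ (V.erase v).powerset,
      (X 0 : MvPolynomial (Fin 2) ℤ) ^ W.card
        * X 1 ^ ((E.filter (fun ε => v ∉ ε)).filter (· ⊆ W)).card)
      = ∑ W ∈ V.powerset, ((V \ W).card : ℕ) • f W := by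
    have h1 : ∀ v ∈ V, ∀ W ∈ (V.erase v).powerset,
        (X 0 : MvPolynomial (Fin 2) ℤ) ^ W.card
          * X 1 ^ ((E.filter (fun ε => v ∉ ε)).filter (· ⊆ W)).card = f W := by
      intro v hv W hW
      rw [Finset.mem_powerset, Finset.subset_erase] at hW
      have : (E.filter (fun ε => v ∉ ε)).filter (· ⊆ W) = E.filter (· ⊆ W) := by
        ext ε
        simp only [Finset.mem_filter]
        constructor
        · rintro ⟨⟨h1, h2⟩, h3⟩; exact ⟨h1, h3⟩
        · rintro ⟨h1, h3⟩; exact ⟨⟨h1, fun hvε => hW.2 (h3 hvε)⟩, h3⟩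
      rw [this]
    rw [Finset.sum_congr rfl (fun v hv => Finset.sum_congr rfl (h1 v hv))]
    rw [Finset.sum_comm' (t' := V.powerset) (s' := fun W => V \ W)]
    · simp [Finset.sum_const, hf]
    · intro v W
      simp only [Finset.mem_powerset, Finset.mem_sdiff, Finset.subset_erase]
      tauto
  -- derivative
  have hder : X 0 * pderiv 0 (∑ W ∈ V.powerset, f W)
      = ∑ W ∈ V.powerset, W.card • f W := by
    rw [map_sum, Finset.mul_sum]
    refine Finset.sum_congr rfl fun W _ => ?_
    simp only [hf]
    rw [pderiv_mul]
    have h1 : pderiv (0 : Fin 2) ((X 1 : MvPolynomial (Fin 2) ℤ) ^ (E.filter (· ⊆ W)).card) = 0 := by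
      rw [pderiv_pow]
      simp [pderiv_X, Pi.single_apply]
    rw [h1, mul_zero, add_zero, pderiv_pow]
    simp only [pderiv_X, Pi.single_eq_same]
    cases' Nat.eq_zero_or_pos W.card with h h
    · simp [h]
    · rw [mul_one]
      rw [nsmul_eq_mul]
      ring_nf
      rw [← pow_succ', show #W - 1 + 1 = #W from Nat.succ_pred_eq_of_pos h]
  rw [hdeck, hder, Finset.mul_sum, ← Finset.sum_add_distrib]
  refine Finset.sum_congr rfl fun W hW => ?_
  rw [Finset.mem_powerset] at hW
  rw [Finset.card_sdiff_of_subset hW, nsmul_eq_mul, nsmul_eq_mul, ← add_mul, ← Nat.cast_add,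
    Nat.add_sub_cancel' (Finset.card_le_card hW)]
end

section
/- Let H = (V, E) be a finite hypergraph with |V| = n, and in ℚ⟦t⟧ define the Hilbert series of the Stanley–Reisner ring of the independence complex of H by H_R(t) = Σ_{W ⊆ V independent} t^{|W|}(1 − t)^{−|W|}, and similarly H_{R_v}(t) = Σ_{W ⊆ V∖{v} independent} t^{|W|}(1 − t)^{−|W|} for each vertex-deleted subhypergraph H − v. Then n · H_R(t) = t(1 − t) · (d/dt)H_R(t) + Σ_{v ∈ V} H_{R_v}(t). In particular, the Hilbert series H_R(t) satisfies a first-order linear ODE determined by the deck and is reconstructible. -/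
open Finset PowerSeries

private lemma unit_cancel : ((1 : ℚ⟦X⟧) - X) * (1 - X)⁻¹ = 1 := by
  apply PowerSeries.mul_inv_cancel
  simp

private lemma deriv_g :
    (X : ℚ⟦X⟧) * (1 - X) * (PowerSeries.derivative ℚ (X * (1 - X)⁻¹))
      = X * (1 - X)⁻¹ := by
  have h1 : PowerSeries.derivative ℚ (((1 : ℚ⟦X⟧) - X) * (1 - X)⁻¹) = 0 := by
    rw [unit_cancel]; exact Derivation.map_one_eq_zero _
  rw [Derivation.leibniz, map_sub, Derivation.map_one_eq_zero, derivative_X, smul_eq_mul, smul_eq_mul] at h1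
  have h3 : ((1:ℚ⟦X⟧) - X) * PowerSeries.derivative ℚ ((1 - X)⁻¹) = (1 - X)⁻¹ := by
    linear_combination h1
  rw [Derivation.leibniz, derivative_X, smul_eq_mul, smul_eq_mul, mul_one]
  linear_combination X^2 * h3

private lemma key_deriv (k : ℕ) :
    (X : ℚ⟦X⟧) * (1 - X) * (PowerSeries.derivative ℚ ((X * (1 - X)⁻¹) ^ k))
      = (k : ℚ⟦X⟧) * (X * (1 - X)⁻¹) ^ k := by
  cases k with
  | zero => simp
  | succ j =>
    rw [Derivation.leibniz_pow]
    simp only [smul_eq_mul, nsmul_eq_mul, Nat.succ_sub_one]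
    push_cast
    linear_combination ((j:ℚ⟦X⟧)+1) * (X * (1 - X)⁻¹)^j * deriv_g

/-- For a finite hypergraph `H = (V, E)` with `|V| = n`, define in
`ℚ⟦t⟧` the Hilbert series `H_R(t) = Σ_{W ⊆ V independent} t^{|W|}(1-t)^{-|W|}` of
the Stanley–Reisner ring of the independence complex of `H`, and similarly
`H_{R_v}(t)` for each vertex-deleted subhypergraph `H - v`. Then
`n · H_R(t) = t(1-t) · (d/dt)H_R(t) + Σ_{v ∈ V} H_{R_v}(t)`; in particular the
Hilbert series satisfies a first-order linear ODE determined by the deck and is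
reconstructible. -/
theorem hilbert_series_reconstructible
    {α : Type*} [DecidableEq α] (V : Finset α) (E : Finset (Finset α))
    (hEV : ∀ ε ∈ E, ε ⊆ V)
    (hAnti : ∀ ε₁ ∈ E, ∀ ε₂ ∈ E, ε₁ ⊆ ε₂ → ε₁ = ε₂) :
    (V.card : PowerSeries ℚ) *
        (∑ W ∈ V.powerset.filter (fun W => ∀ ε ∈ E, ¬ ε ⊆ W),
          (X : PowerSeries ℚ) ^ W.card * ((1 - X)⁻¹) ^ W.card)
      = X * (1 - X) *
          (PowerSeries.derivative ℚ
            (∑ W ∈ V.powerset.filter (fun W => ∀ ε ∈ E, ¬ ε ⊆ W),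
              (X : PowerSeries ℚ) ^ W.card * ((1 - X)⁻¹) ^ W.card))
        + ∑ v ∈ V,
            ∑ W ∈ (V.erase v).powerset.filter
                (fun W => ∀ ε ∈ (E.filter (fun ε => v ∉ ε)), ¬ ε ⊆ W),
              (X : PowerSeries ℚ) ^ W.card * ((1 - X)⁻¹) ^ W.card := by
  set S := V.powerset.filter (fun W => ∀ ε ∈ E, ¬ ε ⊆ W) with hS
  have hsets : ∀ v ∈ V, (V.erase v).powerset.filter
      (fun W => ∀ ε ∈ (E.filter (fun ε => v ∉ ε)), ¬ ε ⊆ W) = S.filter (fun W => v ∉ W) := by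
    intro v _
    ext W
    simp only [hS, mem_filter, mem_powerset, subset_erase]
    constructor
    · rintro ⟨⟨hWV, hvW⟩, hind⟩
      refine ⟨⟨hWV, fun ε hε hεW => ?_⟩, hvW⟩
      by_cases hv : v ∈ ε
      · exact hvW (hεW hv)
      · exact hind ε ⟨hε, hv⟩ hεW
    · rintro ⟨⟨hWV, hind⟩, hvW⟩
      exact ⟨⟨hWV, hvW⟩, fun ε hε => hind ε hε.1⟩
  simp only [← mul_pow]
  have hdeck : (∑ v ∈ V, ∑ W ∈ (V.erase v).powerset.filter
        (fun W => ∀ ε ∈ (E.filter (fun ε => v ∉ ε)), ¬ ε ⊆ W), (X * (1-X)⁻¹ : ℚ⟦X⟧) ^ W.card)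
      = ∑ W ∈ S, ((V.card - W.card : ℕ) : ℚ⟦X⟧) * (X * (1-X)⁻¹) ^ W.card := by
    rw [Finset.sum_congr rfl (fun v hv => by rw [hsets v hv])]
    simp only [Finset.sum_filter]
    rw [Finset.sum_comm]
    refine Finset.sum_congr rfl fun W hW => ?_
    have hWV : W ⊆ V := (mem_powerset.mp (mem_filter.mp hW).1)
    rw [← Finset.sum_filter, Finset.filter_not, Finset.filter_mem_eq_inter,
      Finset.inter_eq_right.mpr hWV, Finset.sum_const, Finset.card_sdiff_of_subset hWV, nsmul_eq_mul]
  rw [hdeck, map_sum, Finset.mul_sum, Finset.mul_sum,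
    Finset.sum_congr rfl (fun W (_ : W ∈ S) => key_deriv W.card), ← Finset.sum_add_distrib]
  refine Finset.sum_congr rfl fun W hW => ?_
  have hWV : W ⊆ V := (mem_powerset.mp (mem_filter.mp hW).1)
  rw [Nat.cast_sub (card_le_card hWV)]
  ring
end
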